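/- Let H be a Hopf algebra over a field k and let J ⊆ J′ be two primitive ideals of H. Then g_J = g_{J′} in the chain group C(H), where g_J denotes the generator of C(H) attached to any simple H-module with annihilator J. -/

import Mathlib

open TensorProduct

noncomputable section

namespace Paper

universe u

section TensorDual

variable (k : Type*) [CommSemiring k]
variable (A : Type*) [Semiring A] [Algebra k A]
variable (M N : Type*) [AddCommMonoid M] [Module k M] [Module A M]
  [IsScalarTower k A M] [SMulCommClass k A M]
  [AddCommMonoid N] [Module k N] [Module A N] [IsScalarTower k A N] [SMulCommClass k A N]

/-- The representation of `A ⊗[k] A` on `M ⊗[k] N`. -/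
def tensorRep : A ⊗[k] A →ₐ[k] Module.End k (M ⊗[k] N) :=
  (Module.endTensorEndAlgHom (R := k) (S := k) (A := k) (M := M) (N := N)).comp
    (Algebra.TensorProduct.map (Algebra.lsmul k k M) (Algebra.lsmul k k N))

/-- The module structure on `M ⊗[k] N` obtained by letting `A` act through an algebra
map `Δ : A →ₐ[k] A ⊗[k] A` (e.g. the comultiplication of a bialgebra). -/
def diagModule (Δ : A →ₐ[k] A ⊗[k] A) : Module A (M ⊗[k] N) :=
  Module.compHom (M ⊗[k] N) ((tensorRep k A M N).comp Δ).toRingHom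

variable {k A} in
/-- The contragredient representation on the full linear dual, the action being through an
algebra anti-endomorphism `σ` (e.g. the antipode of a Hopf algebra). -/
def dualRep (σ : A →ₐ[k] Aᵐᵒᵖ) : A →ₐ[k] Module.End k (Module.Dual k M) where
  toFun a := ((Algebra.lsmul k k M) (σ a).unop).dualMap
  map_one' := by
    ext φ v
    simp [LinearMap.dualMap_apply]
  map_mul' a b := by
    ext φ v
    simp [LinearMap.dualMap_apply, MulOpposite.unop_mul, map_mul, Module.End.mul_apply]
  map_zero' := by
    ext φ v
    simp [LinearMap.dualMap_apply]
  map_add' a b := by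
    ext φ v
    simp [LinearMap.dualMap_apply, MulOpposite.unop_add, map_add, LinearMap.add_apply]
  commutes' r := by
    ext φ v
    simp [LinearMap.dualMap_apply, Module.algebraMap_end_apply]

variable {k A} in
/-- The module structure on the full linear dual `M*` of a module `M`, with the action through
an algebra anti-endomorphism `σ` : `(a • f) v = f (σ a • v)`. -/
def dualModule (σ : A →ₐ[k] Aᵐᵒᵖ) : Module A (Module.Dual k M) :=
  Module.compHom (Module.Dual k M) (dualRep M σ).toRingHom

end TensorDual

section Chain

variable (k : Type u) [Field k]
variable (A : Type u) [Ring A] [Algebra k A]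

/-- A bundled simple left `A`-module (for an algebra `A` over a field `k`),
together with its (automatically unique) compatible `k`-vector space structure. -/
structure SimpleMod where
  carrier : Type u
  [acg : AddCommGroup carrier]
  [modk : Module k carrier]
  [modA : Module A carrier]
  [tower : IsScalarTower k A carrier]
  [scc : SMulCommClass k A carrier]
  [simple : IsSimpleModule A carrier]

attribute [instance] SimpleMod.acg SimpleMod.modk SimpleMod.modA SimpleMod.tower
  SimpleMod.scc SimpleMod.simple

variable {k A}

/-- Isomorphism of simple modules. -/
def simpleModSetoid : Setoid (SimpleMod k A) where
  r M N := Nonempty (M.carrier ≃ₗ[A] N.carrier)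
  iseqv := ⟨fun _ => ⟨LinearEquiv.refl _ _⟩, fun ⟨e⟩ => ⟨e.symm⟩,
    fun ⟨e⟩ ⟨f⟩ => ⟨e.trans f⟩⟩

/-- The type of isomorphism classes of simple left `A`-modules. -/
def SimpleModClass (k A : Type u) [Field k] [Ring A] [Algebra k A] : Type (u + 1) :=
  Quotient (simpleModSetoid (k := k) (A := A))

/-- The annihilator of (the module underlying) a simple module. -/
def ann (M : SimpleMod k A) : Set A := (Module.annihilator A M.carrier : Ideal A)

/-- The annihilator of a tensor product of two modules, the algebra acting diagonally through
the comultiplication `Δ`. -/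
def tensorAnn (Δ : A →ₐ[k] A ⊗[k] A) (M N : SimpleMod k A) : Set A :=
  letI : Module A (M.carrier ⊗[k] N.carrier) := diagModule k A M.carrier N.carrier Δ
  (Module.annihilator A (M.carrier ⊗[k] N.carrier) : Ideal A)

/-- The annihilator of the dual (contragredient) module of `M`: the set of elements `a` whose
action on every functional `φ` (namely `v ↦ φ (σ a • v)`, where `σ` is the antipode) is zero. -/
def dualAnn (σ : A → A) (M : SimpleMod k A) : Set A :=
  {a : A | ∀ (φ : Module.Dual k M.carrier) (v : M.carrier), φ (σ a • v) = 0}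

variable (k A) in
/-- The relators defining the chain group of `A` (with respect to comultiplication `Δ`,
antipode `σ` and counit `ε`): one generator per isomorphism class of simple
`A`-modules; `g ε = 1` for the trivial module `ε`; `g M = g M' * g M''` whenever `M` is weakly
contained in `M' ⊗ M''`; and `g P = (g M)⁻¹` whenever `P` is weakly contained in the
dual of `M`. -/
def chainRels (Δ : A →ₐ[k] A ⊗[k] A) (σ : A → A) (ε : A →ₐ[k] k) :
    Set (FreeGroup (SimpleModClass k A)) :=
  {w | ∃ M : SimpleMod k A,
      (∀ (a : A) (v : M.carrier), a • v = ε a • v) ∧ w = FreeGroup.of ⟦M⟧} ∪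
  {w | ∃ M M' M'' : SimpleMod k A, tensorAnn Δ M' M'' ⊆ ann M ∧
      w = FreeGroup.of ⟦M⟧ * (FreeGroup.of ⟦M'⟧ * FreeGroup.of ⟦M''⟧)⁻¹} ∪
  {w | ∃ P M : SimpleMod k A, dualAnn σ M ⊆ ann P ∧
      w = FreeGroup.of ⟦P⟧ * FreeGroup.of ⟦M⟧}

variable (k A) in
/-- The chain group of `A` (with respect to the given comultiplication, antipode and counit),
presented by generators and relations. -/
def ChainGroup (Δ : A →ₐ[k] A ⊗[k] A) (σ : A → A) (ε : A →ₐ[k] k) : Type (u + 1) :=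
  PresentedGroup (chainRels k A Δ σ ε)

instance (Δ : A →ₐ[k] A ⊗[k] A) (σ : A → A) (ε : A →ₐ[k] k) :
    Group (ChainGroup k A Δ σ ε) :=
  inferInstanceAs (Group (PresentedGroup _))

/-- The generator of the chain group attached to a simple module. -/
def gen (Δ : A →ₐ[k] A ⊗[k] A) (σ : A → A) (ε : A →ₐ[k] k) (M : SimpleMod k A) :
    ChainGroup k A Δ σ ε :=
  PresentedGroup.of ⟦M⟧

end Chain

end Paper

end

/-! The counit axiom `(id ⊗ ε) ∘ Δ = id` makes `a` act on `v ⊗ w` as `(a • v) ⊗ w` whenever `w`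
spans the trivial module `ε`, so the annihilator of `M ⊗ ε` is contained in that of `M`. Hence
`ann M ⊆ ann M'` makes `M'` weakly contained in `M ⊗ ε`, and the relations give
`g_{M'} = g_M g_ε = g_M`. -/

namespace Paper

universe u

section Character

variable {k A : Type u} [Field k] [Ring A] [Algebra k A]

-- For the counit of a bialgebra this is the trivial module `ε` of the chain-group relations.
def characterSimpleMod (ε : A →ₐ[k] k) : SimpleMod k A :=
  letI : Module A k := Module.compHom k ε.toRingHom
  { carrier := k
    tower := ⟨fun c a x => by
      change ε (c • a) * x = c * (ε a * x)
      rw [map_smul, smul_eq_mul, mul_assoc]⟩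
    scc := ⟨fun c a x => mul_left_comm c (ε a) x⟩
    simple :=
      haveI : RingHomSurjective ε.toRingHom :=
        ⟨fun c => ⟨algebraMap k A c, ε.commutes c⟩⟩
      ((LinearMap.isSimpleModule_iff_of_bijective (σ := ε.toRingHom)
        { toFun := id, map_add' := fun _ _ => rfl, map_smul' := fun _ _ => rfl }
        Function.bijective_id).2 inferInstance) }

theorem characterSimpleMod_smul (ε : A →ₐ[k] k) (a : A) (x : (characterSimpleMod ε).carrier) :
    a • x = ε a • x :=
  rfl

end Character

section TensorCharacter

variable {k A M N : Type*} [CommSemiring k] [Semiring A] [Algebra k A]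
  [AddCommMonoid M] [Module k M] [Module A M] [IsScalarTower k A M]
  [AddCommMonoid N] [Module k N] [Module A N] [IsScalarTower k A N]

theorem tensorRep_tmul_of_smul_eq_character {ε : A →ₐ[k] k} {w : N}
    (hw : ∀ a : A, a • w = ε a • w) (t : A ⊗[k] A) (v : M) :
    tensorRep k A M N t (v ⊗ₜ w) =
      (TensorProduct.rid k A (ε.toLinearMap.lTensor A t) • v) ⊗ₜ w := by
  induction t using TensorProduct.induction_on with
  | zero => simp
  | tmul x y =>
    change (x • v) ⊗ₜ[k] (y • w) = _
    simp [hw, TensorProduct.tmul_smul, TensorProduct.smul_tmul', smul_assoc]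
  | add s t hs ht =>
    simp only [map_add, LinearMap.add_apply, add_smul, hs, ht, TensorProduct.add_tmul]

end TensorCharacter

section Bialgebra

variable {k A M N : Type*} [Field k] [Ring A] [Bialgebra k A]
  [AddCommGroup M] [Module k M] [Module A M] [IsScalarTower k A M]
  [AddCommGroup N] [Module k N] [Module A N] [IsScalarTower k A N]

theorem annihilator_diagModule_le_of_invariant {w : N} (hw0 : w ≠ 0)
    (hw : ∀ a : A, a • w = Bialgebra.counitAlgHom k A a • w) :
    letI := diagModule k A M N (Bialgebra.comulAlgHom k A)
    Module.annihilator A (M ⊗[k] N) ≤ Module.annihilator A M := by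
  let := diagModule k A M N (Bialgebra.comulAlgHom k A)
  intro a ha
  obtain ⟨φ, hφ⟩ : ∃ φ : Module.Dual k N, φ w ≠ 0 := by
    by_contra! h
    exact hw0 ((Module.forall_dual_apply_eq_zero_iff k w).1 h)
  refine Module.mem_annihilator.2 fun v => ?_
  have htensor : (a • v) ⊗ₜ[k] w = 0 := by
    have h := tensorRep_tmul_of_smul_eq_character hw (Coalgebra.comul a) v
    rw [Bialgebra.toLinearMap_counitAlgHom, Coalgebra.lTensor_counit_comul] at h
    simpa using h.symm.trans (Module.mem_annihilator.1 ha (v ⊗ₜ w))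
  simpa [hφ] using congrArg (fun x => TensorProduct.rid k M (φ.lTensor M x)) htensor

end Bialgebra

section Relations

variable {k A : Type u} [Field k] [Ring A] [Algebra k A]
  {Δ : A →ₐ[k] A ⊗[k] A} {σ : A → A} {ε : A →ₐ[k] k}

theorem gen_characterSimpleMod : gen Δ σ ε (characterSimpleMod ε) = 1 :=
  PresentedGroup.one_of_mem (Or.inl (Or.inl ⟨_, characterSimpleMod_smul ε, rfl⟩))

theorem gen_eq_mul_of_tensorAnn_subset {M M' M'' : SimpleMod k A}
    (h : tensorAnn Δ M' M'' ⊆ ann M) : gen Δ σ ε M = gen Δ σ ε M' * gen Δ σ ε M'' :=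
  (PresentedGroup.mk_eq_mk_of_mul_inv_mem (Or.inl (Or.inr ⟨M, M', M'', h, rfl⟩))).trans
    (map_mul _ _ _)

end Relations

theorem gen_eq_gen_of_annihilator_le {k A : Type u} [Field k] [Ring A] [Bialgebra k A]
    {σ : A → A} {M M' : SimpleMod k A}
    (h : Module.annihilator A M.carrier ≤ Module.annihilator A M'.carrier) :
    gen (Bialgebra.comulAlgHom k A) σ (Bialgebra.counitAlgHom k A) M' =
      gen (Bialgebra.comulAlgHom k A) σ (Bialgebra.counitAlgHom k A) M := by
  have := IsSimpleModule.nontrivial A (characterSimpleMod (Bialgebra.counitAlgHom k A)).carrier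
  obtain ⟨w, hw0⟩ := exists_ne (0 : (characterSimpleMod (Bialgebra.counitAlgHom k A)).carrier)
  have hM : tensorAnn (Bialgebra.comulAlgHom k A) M
      (characterSimpleMod (Bialgebra.counitAlgHom k A)) ⊆ ann M :=
    annihilator_diagModule_le_of_invariant hw0 fun a => characterSimpleMod_smul _ a w
  rw [gen_eq_mul_of_tensorAnn_subset (hM.trans h), gen_characterSimpleMod, mul_one]

end Paper

open Paper in
universe u in
/-- If `J ⊆ J'` are primitive ideals of a Hopf algebra `H` over a field, then the
chain-group generators attached to simple modules with annihilators `J` and `J'` coincide. -/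
theorem gen_eq_gen_of_primitive_le
    (k H : Type u) [Field k] [Ring H] [HopfAlgebra k H]
    (J J' : Ideal H)
    (hJ : ∃ M : SimpleMod k H, Module.annihilator H M.carrier = J)
    (hJ' : ∃ M : SimpleMod k H, Module.annihilator H M.carrier = J')
    (hle : J ≤ J') :
    ∀ M M' : SimpleMod k H,
      Module.annihilator H M.carrier = J → Module.annihilator H M'.carrier = J' →
      gen (Bialgebra.comulAlgHom k H) (fun a => HopfAlgebra.antipode (R := k) a)
          (Bialgebra.counitAlgHom k H) M =
        gen (Bialgebra.comulAlgHom k H) (fun a => HopfAlgebra.antipode (R := k) a)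
          (Bialgebra.counitAlgHom k H) M' := by
  rintro M M' rfl rfl
  exact (gen_eq_gen_of_annihilator_le hle).symm
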